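/- arXiv:cond-mat/0307308 — 3 statements merged into one kernel-verified Lean document; each statement's English description precedes it below -/
import Mathlib

section
/- For all real numbers α > 0, n > 0, m > 0, x > 0 and 0 < u < 1, the following integral identity holds: (1/(Γ(n)Γ(m))) · ∫_{x/u}^∞ (y^{−α})^{n−1} · (x^{−α} − y^{−α})^{m−1} · α y^{−(1+α)} dy = (x^{−α})^{n+m−1} · B_{n,m}(u^α) / Γ(n+m). -/
open Real MeasureTheory

/-- The cumulative distribution function of the Beta(n,m) distribution. -/
noncomputable def betaCDF (n m v : ℝ) : ℝ :=
  ∫ s in (0:ℝ)..v, (Real.Gamma (n + m) / (Real.Gamma n * Real.Gamma m)) *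
    s ^ (n - 1) * (1 - s) ^ (m - 1)

/-!
Substituting `t = y ^ (-α)` turns the integral over `(x / u, ∞)` into
`∫₀^{c u^α} t^(n-1) (c - t)^(m-1) dt` with `c = x ^ (-α)`, since `α y^(-(1+α)) dy` is exactly `|dt|`.
Rescaling `t = c s` then pulls out `c^(n+m-1)` and leaves the incomplete Beta integral
`∫₀^{u^α} s^(n-1) (1 - s)^(m-1) ds`, which is `B_{n,m}(u^α)` up to the normalising constant.
-/

open Set

noncomputable def incompleteBeta (n m v : ℝ) : ℝ :=
  ∫ s in (0:ℝ)..v, s ^ (n - 1) * (1 - s) ^ (m - 1)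

theorem betaCDF_eq_mul_incompleteBeta (n m v : ℝ) :
    betaCDF n m v = Real.Gamma (n + m) / (Real.Gamma n * Real.Gamma m) * incompleteBeta n m v := by
  simp only [betaCDF, incompleteBeta, mul_assoc, intervalIntegral.integral_const_mul]

theorem image_rpow_neg_Ioi {α a : ℝ} (hα : 0 < α) (ha : 0 < a) :
    (fun y : ℝ => y ^ (-α)) '' Ioi a = Ioo 0 (a ^ (-α)) := by
  ext t
  constructor
  · rintro ⟨y, hy, rfl⟩
    exact ⟨rpow_pos_of_pos (ha.trans hy) _, rpow_lt_rpow_of_neg ha hy (neg_neg_of_pos hα)⟩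
  · rintro ⟨ht0, hta⟩
    refine ⟨t ^ (-α⁻¹), ?_, ?_⟩
    · have := rpow_lt_rpow_of_neg ht0 hta (neg_neg_of_pos (inv_pos.mpr hα))
      rwa [← rpow_mul ha.le, neg_mul_neg, mul_inv_cancel₀ hα.ne', rpow_one] at this
    · simp only [← rpow_mul ht0.le, neg_mul_neg, inv_mul_cancel₀ hα.ne', rpow_one]

theorem integral_Ioi_comp_rpow_neg {α a : ℝ} (hα : 0 < α) (ha : 0 < a) (f : ℝ → ℝ) :
    ∫ y in Ioi a, f (y ^ (-α)) * (α * y ^ (-(1 + α))) = ∫ t in (0:ℝ)..a ^ (-α), f t := by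
  have hpos : Ioi a ⊆ Ioi 0 := Ioi_subset_Ioi ha.le
  have hderiv : ∀ y ∈ Ioi a,
      HasDerivWithinAt (fun y : ℝ => y ^ (-α)) (-α * y ^ (-α - 1)) (Ioi a) y :=
    fun y hy => (hasDerivAt_rpow_const (Or.inl (hpos hy).ne')).hasDerivWithinAt
  have hinj : InjOn (fun y : ℝ => y ^ (-α)) (Ioi a) :=
    (rpow_left_injOn (neg_ne_zero.mpr hα.ne')).mono (hpos.trans Ioi_subset_Ici_self)
  have hcov := integral_image_eq_integral_abs_deriv_smul measurableSet_Ioi hderiv hinj f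
  rw [image_rpow_neg_Ioi hα ha] at hcov
  rw [intervalIntegral.integral_of_le (by positivity), integral_Ioc_eq_integral_Ioo, hcov]
  refine setIntegral_congr_fun measurableSet_Ioi fun y hy => ?_
  have hy0 : 0 < y := hpos hy
  rw [smul_eq_mul, abs_mul, abs_neg, abs_of_pos hα, abs_of_pos (by positivity),
    show -α - 1 = -(1 + α) by ring, mul_comm]

theorem integral_rpow_mul_sub_rpow_eq_incompleteBeta {c v : ℝ} (hc : 0 < c) (hv0 : 0 ≤ v)
    (hv1 : v ≤ 1) (n m : ℝ) :
    ∫ t in (0:ℝ)..c * v, t ^ (n - 1) * (c - t) ^ (m - 1) = c ^ (n + m - 1) * incompleteBeta n m v := by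
  have hscale : ∀ s ∈ uIcc 0 v, (c * s) ^ (n - 1) * (c - c * s) ^ (m - 1)
      = c ^ (n - 1) * c ^ (m - 1) * (s ^ (n - 1) * (1 - s) ^ (m - 1)) := by
    intro s hs
    rw [uIcc_of_le hv0] at hs
    rw [← mul_one_sub, mul_rpow hc.le hs.1, mul_rpow hc.le (by linarith [hs.2])]
    ring
  have hpow : c * (c ^ (n - 1) * c ^ (m - 1)) = c ^ (n + m - 1) := by
    rw [← rpow_add hc, mul_comm, ← rpow_add_one hc.ne']
    ring_nf
  calc ∫ t in (0:ℝ)..c * v, t ^ (n - 1) * (c - t) ^ (m - 1)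
      = c * ∫ s in (0:ℝ)..v, (c * s) ^ (n - 1) * (c - c * s) ^ (m - 1) := by
        rw [intervalIntegral.integral_comp_mul_left (fun t => t ^ (n - 1) * (c - t) ^ (m - 1))
          hc.ne', mul_zero, smul_eq_mul, mul_inv_cancel_left₀ hc.ne']
    _ = c ^ (n + m - 1) * incompleteBeta n m v := by
        rw [intervalIntegral.integral_congr hscale, intervalIntegral.integral_const_mul,
          ← mul_assoc, hpow, incompleteBeta]

/-- Lemma 6a: the key integral identity for the hierarchy of extreme flights of the
selfsimilar one-sided Lévy process with flight tail `Λ(x) = x^(-α)`. -/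
theorem extreme_flight_integral_identity (α n m x u : ℝ)
    (hα : 0 < α) (hn : 0 < n) (hm : 0 < m) (hx : 0 < x) (hu0 : 0 < u) (hu1 : u < 1) :
    (1 / (Real.Gamma n * Real.Gamma m)) *
      (∫ y in Set.Ioi (x / u),
        (y ^ (-α)) ^ (n - 1) * (x ^ (-α) - y ^ (-α)) ^ (m - 1) * (α * y ^ (-(1 + α))))
    = (x ^ (-α)) ^ (n + m - 1) * betaCDF n m (u ^ α) / Real.Gamma (n + m) := by
  have hsubst := integral_Ioi_comp_rpow_neg hα (div_pos hx hu0)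
    fun t => t ^ (n - 1) * (x ^ (-α) - t) ^ (m - 1)
  have hbound : (x / u) ^ (-α) = x ^ (-α) * u ^ α := by
    rw [div_rpow hx.le hu0.le, rpow_neg hu0.le, div_inv_eq_mul]
  have hscale := integral_rpow_mul_sub_rpow_eq_incompleteBeta (rpow_pos_of_pos hx (-α))
    (rpow_nonneg hu0.le α) (rpow_le_one hu0.le hu1.le hα.le) n m
  have hGamma : Real.Gamma (n + m) ≠ 0 := (Real.Gamma_pos_of_pos (add_pos hn hm)).ne'
  rw [hsubst, hbound, hscale, betaCDF_eq_mul_incompleteBeta]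
  field_simp
end

section
/- Fix a real number α > 0, a real t > 0 and an integer K ≥ 1. Then for all u_1, …, u_K ∈ (0,1]: ∫_{{x ∈ ℝ^{K+1} : x_1 > ⋯ > x_{K+1} > 0 and x_{k+1} ≤ u_k x_k for k = 1,…,K}} t^{K+1} · exp(−t·x_{K+1}^{−α}) · ∏_{k=1}^{K+1} α x_k^{−(1+α)} dx = ∏_{k=1}^K u_k^{α k}. -/
/-!
Integrate out the smallest flight first. Since `u_K ≤ 1`, the constraint `x_{K+1} < x_K` is implied
by `x_{K+1} ≤ u_K x_K` up to a null set, and `t α y^{-1-α} e^{-t y^{-α}}` is the derivative of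
`e^{-t y^{-α}}`, so integrating `x_{K+1}` over `(0, u_K x_K]` leaves the factor
`e^{-t u_K^{-α} x_K^{-α}}`. By self-similarity this turns the remaining integrand into
`u_K^{αK}` times the density of the `K` largest flights at the rescaled time `t u_K^{-α}`,
so induction on `K` peels off one factor `u_k^{αk}` at a time; the base case is the total mass
of the law of the largest flight.
-/

open Real MeasureTheory Set Filter Topology
open scoped ENNReal

theorem lintegral_eq_lintegral_lintegral_snoc {E : Type*} [MeasureSpace E]
    [SigmaFinite (volume : Measure E)] {n : ℕ} {f : (Fin (n + 1) → E) → ℝ≥0∞} (hf : Measurable f) :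
    ∫⁻ x, f x = ∫⁻ xs, ∫⁻ y, f (Fin.snoc xs y) := by
  let e := MeasurableEquiv.piFinSuccAbove (fun _ : Fin (n + 1) => E) (Fin.last n)
  have he : ∀ y xs, e.symm (y, xs) = Fin.snoc xs y := fun y xs => Fin.insertNth_last' y xs
  rw [← ((volume_preserving_piFinSuccAbove (fun _ => E) (Fin.last n)).symm e).lintegral_comp hf,
    Measure.volume_eq_prod,
    lintegral_prod_symm (fun p => f (e.symm p)) (hf.comp e.symm.measurable).aemeasurable]
  simp only [he]

/-- The distribution function of the largest flight up to time `t`. -/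
noncomputable def frechetCDF (α t y : ℝ) : ℝ := if y ≤ 0 then 0 else exp (-t * y ^ (-α))

noncomputable def frechetPDF (α t y : ℝ) : ℝ := t * α * y ^ (-(1 + α)) * exp (-t * y ^ (-α))

section Frechet

variable {α t : ℝ}

theorem frechetPDF_nonneg (hα : 0 < α) (ht : 0 < t) {y : ℝ} (hy : 0 ≤ y) :
    0 ≤ frechetPDF α t y := by
  unfold frechetPDF; positivity

theorem frechetCDF_of_pos {y : ℝ} (hy : 0 < y) : frechetCDF α t y = exp (-t * y ^ (-α)) :=
  if_neg hy.not_ge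

theorem hasDerivAt_frechetCDF {y : ℝ} (hy : 0 < y) :
    HasDerivAt (frechetCDF α t) (frechetPDF α t y) y := by
  have hpow : HasDerivAt (fun x : ℝ => x ^ (-α)) (-α * y ^ (-α - 1)) y :=
    hasDerivAt_rpow_const (Or.inl hy.ne')
  have heq : (fun x : ℝ => exp (-t * x ^ (-α))) =ᶠ[𝓝 y] frechetCDF α t := by
    filter_upwards [Ioi_mem_nhds hy] with x hx using (frechetCDF_of_pos hx).symm
  refine ((hpow.const_mul (-t)).exp.congr_of_eventuallyEq heq.symm).congr_deriv ?_
  rw [frechetPDF, show -(1 + α) = -α - 1 by ring]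
  ring

theorem continuousWithinAt_frechetCDF_zero (hα : 0 < α) (ht : 0 < t) :
    ContinuousWithinAt (frechetCDF α t) (Ici 0) 0 := by
  have hlim : Tendsto (frechetCDF α t) (𝓝[>] 0) (𝓝 0) := by
    have h := tendsto_exp_atBot.comp
      ((tendsto_rpow_neg_nhdsGT_zero (neg_lt_zero.2 hα)).const_mul_atTop_of_neg (neg_lt_zero.2 ht))
    refine h.congr' ?_
    filter_upwards [self_mem_nhdsWithin] with x hx using (frechetCDF_of_pos hx).symm
  have hzero : frechetCDF α t 0 = 0 := if_pos le_rfl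
  rw [ContinuousWithinAt, hzero, ← Ioi_insert, nhdsWithin_insert, tendsto_sup]
  exact ⟨by simpa [hzero] using tendsto_pure_nhds (frechetCDF α t) 0, hlim⟩

theorem tendsto_frechetCDF_atTop (hα : 0 < α) :
    Tendsto (frechetCDF α t) atTop (𝓝 1) := by
  have h := (continuous_exp.tendsto _).comp ((tendsto_rpow_neg_atTop hα).const_mul (-t))
  rw [mul_zero, exp_zero] at h
  refine h.congr' ?_
  filter_upwards [eventually_gt_atTop 0] with x hx using (frechetCDF_of_pos hx).symm

theorem lintegral_frechetPDF_Ioc (hα : 0 < α) (ht : 0 < t) {c : ℝ} (hc : 0 < c) :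
    ∫⁻ y in Ioc 0 c, ENNReal.ofReal (frechetPDF α t y) = ENNReal.ofReal (exp (-t * c ^ (-α))) := by
  have hcont : ContinuousOn (frechetCDF α t) (Icc 0 c) := by
    intro x hx
    rcases hx.1.eq_or_lt with rfl | hx0
    · exact (continuousWithinAt_frechetCDF_zero hα ht).mono Icc_subset_Ici_self
    · exact (hasDerivAt_frechetCDF hx0).continuousAt.continuousWithinAt
  have hderiv : ∀ x ∈ Ioo 0 c, HasDerivAt (frechetCDF α t) (frechetPDF α t x) x :=
    fun x hx => hasDerivAt_frechetCDF hx.1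
  have hint : IntegrableOn (frechetPDF α t) (Ioc 0 c) :=
    intervalIntegral.integrableOn_deriv_of_nonneg hcont hderiv
      fun x hx => frechetPDF_nonneg hα ht hx.1.le
  rw [← ofReal_integral_eq_lintegral_ofReal hint
      (ae_restrict_of_forall_mem measurableSet_Ioc fun x hx => frechetPDF_nonneg hα ht hx.1.le),
    ← intervalIntegral.integral_of_le hc.le,
    intervalIntegral.integral_eq_sub_of_hasDerivAt_of_le hc.le hcont hderiv
      ((intervalIntegrable_iff_integrableOn_Ioc_of_le hc.le).2 hint),
    frechetCDF_of_pos hc, show frechetCDF α t 0 = 0 from if_pos le_rfl, sub_zero]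

theorem lintegral_frechetPDF_Ioi (hα : 0 < α) (ht : 0 < t) :
    ∫⁻ y in Ioi 0, ENNReal.ofReal (frechetPDF α t y) = 1 := by
  have hderiv : ∀ x ∈ Ioi 0, HasDerivAt (frechetCDF α t) (frechetPDF α t x) x :=
    fun x hx => hasDerivAt_frechetCDF hx
  have hpos : ∀ x ∈ Ioi 0, 0 ≤ frechetPDF α t x := fun x hx => frechetPDF_nonneg hα ht hx.le
  have hcont := continuousWithinAt_frechetCDF_zero hα ht
  rw [← ofReal_integral_eq_lintegral_ofReal
      (integrableOn_Ioi_deriv_of_nonneg hcont hderiv hpos (tendsto_frechetCDF_atTop hα))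
      (ae_restrict_of_forall_mem measurableSet_Ioi hpos),
    integral_Ioi_of_hasDerivAt_of_nonneg hcont hderiv hpos (tendsto_frechetCDF_atTop hα),
    show frechetCDF α t 0 = 0 from if_pos le_rfl, sub_zero, ENNReal.ofReal_one]

end Frechet

/-- `x i` is the `(i+1)`-st largest flight, so `u k` bounds the ratio `x_{k+2} / x_{k+1}`. -/
def ratioRegion (K : ℕ) (u : Fin K → ℝ) : Set (Fin (K + 1) → ℝ) :=
  {x | (StrictAnti x ∧ 0 < x (Fin.last K)) ∧ ∀ k : Fin K, x k.succ ≤ u k * x k.castSucc}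

noncomputable def flightsDensity (α t : ℝ) (K : ℕ) (x : Fin (K + 1) → ℝ) : ℝ :=
  t ^ (K + 1) * exp (-t * x (Fin.last K) ^ (-α)) * ∏ i, α * x i ^ (-(1 + α))

theorem measurableSet_ratioRegion (K : ℕ) (u : Fin K → ℝ) : MeasurableSet (ratioRegion K u) := by
  simp only [ratioRegion, Fin.strictAnti_iff_succ_lt, ofPred_and, ofPred_forall]
  measurability

theorem snoc_mem_ratioRegion_iff {K : ℕ} {u : Fin (K + 1) → ℝ} {xs : Fin (K + 1) → ℝ} {y : ℝ} :
    Fin.snoc xs y ∈ ratioRegion (K + 1) u ↔ xs ∈ ratioRegion K (Fin.init u) ∧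
      y ∈ Ioc 0 (u (Fin.last K) * xs (Fin.last K)) ∧ y < xs (Fin.last K) := by
  simp only [ratioRegion, mem_ofPred_eq, Fin.strictAnti_iff_succ_lt, Fin.forall_fin_succ',
    Fin.succ_castSucc, Fin.succ_last, Fin.snoc_castSucc, Fin.snoc_last, Fin.init, mem_Ioc]
  constructor
  · rintro ⟨⟨⟨hanti, hy⟩, hy0⟩, hu, hyu⟩
    exact ⟨⟨⟨hanti, hy0.trans hy⟩, hu⟩, ⟨hy0, hyu⟩, hy⟩
  · rintro ⟨⟨⟨hanti, -⟩, hu⟩, ⟨hy0, hyu⟩, hy⟩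
    exact ⟨⟨⟨hanti, hy⟩, hy0⟩, hu, hyu⟩

theorem pos_of_mem_ratioRegion {K : ℕ} {u : Fin K → ℝ} {x : Fin (K + 1) → ℝ}
    (hx : x ∈ ratioRegion K u) (i : Fin (K + 1)) : 0 < x i :=
  hx.1.2.trans_le (hx.1.1.antitone (Fin.le_last i))

theorem measurable_flightsDensity (α t : ℝ) (K : ℕ) : Measurable (flightsDensity α t K) := by
  unfold flightsDensity; fun_prop

theorem flightsDensity_nonneg {α t : ℝ} (hα : 0 < α) (ht : 0 < t) {K : ℕ} {x : Fin (K + 1) → ℝ}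
    (hx : ∀ i, 0 < x i) : 0 ≤ flightsDensity α t K x := by
  have hprod : 0 ≤ ∏ i, α * x i ^ (-(1 + α)) :=
    Finset.prod_nonneg fun i _ => mul_nonneg hα.le (rpow_nonneg (hx i).le _)
  unfold flightsDensity; positivity

theorem flightsDensity_snoc (α t : ℝ) {K : ℕ} (xs : Fin (K + 1) → ℝ) (y : ℝ) :
    flightsDensity α t (K + 1) (Fin.snoc xs y) =
      t ^ (K + 1) * (∏ i, α * xs i ^ (-(1 + α))) * frechetPDF α t y := by
  rw [flightsDensity, Fin.prod_univ_castSucc]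
  simp only [Fin.snoc_last, Fin.snoc_castSucc, frechetPDF]
  ring

theorem rpow_mul_flightsDensity_rescale (α t : ℝ) {K : ℕ} {c : ℝ} (hc : 0 < c)
    {xs : Fin (K + 1) → ℝ} (hxs : 0 ≤ xs (Fin.last K)) :
    c ^ (α * (K + 1)) * flightsDensity α (t * c ^ (-α)) K xs =
      t ^ (K + 1) * (∏ i, α * xs i ^ (-(1 + α))) * exp (-t * (c * xs (Fin.last K)) ^ (-α)) := by
  have hpow : c ^ (α * (K + 1)) * (t * c ^ (-α)) ^ (K + 1) = t ^ (K + 1) := by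
    have hcK : c ^ (α * (K + 1)) = (c ^ α) ^ (K + 1) := by rw [rpow_mul hc.le]; norm_cast
    calc c ^ (α * (K + 1)) * (t * c ^ (-α)) ^ (K + 1)
        = t ^ (K + 1) * (c ^ α * c ^ (-α)) ^ (K + 1) := by rw [hcK]; ring
      _ = t ^ (K + 1) := by rw [← rpow_add hc, add_neg_cancel, rpow_zero, one_pow, mul_one]
  have hexp : -(t * c ^ (-α)) * xs (Fin.last K) ^ (-α) =
      -t * (c ^ (-α) * xs (Fin.last K) ^ (-α)) := by ring
  rw [flightsDensity, mul_rpow hc.le hxs, ← hpow, hexp]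
  ring

section Induction

variable {α t : ℝ} {K : ℕ}

theorem lintegral_snoc_indicator_ratioRegion (hα : 0 < α) (ht : 0 < t) {u : Fin (K + 1) → ℝ}
    (hu : u (Fin.last K) ∈ Ioc 0 1) (xs : Fin (K + 1) → ℝ) :
    ∫⁻ y, (ratioRegion (K + 1) u).indicator
        (fun x => ENNReal.ofReal (flightsDensity α t (K + 1) x)) (Fin.snoc xs y) =
      (ratioRegion K (Fin.init u)).indicator (fun xs => ENNReal.ofReal
        (u (Fin.last K) ^ (α * (K + 1)) * flightsDensity α (t * u (Fin.last K) ^ (-α)) K xs))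
        xs := by
  set c := u (Fin.last K)
  set b := xs (Fin.last K)
  by_cases hxs : xs ∈ ratioRegion K (Fin.init u)
  swap
  · rw [indicator_of_notMem hxs]
    refine lintegral_eq_zero_of_ae_eq_zero (ae_of_all _ fun y => indicator_of_notMem ?_ _)
    exact fun h => hxs (snoc_mem_ratioRegion_iff.1 h).1
  have hb : 0 < b := pos_of_mem_ratioRegion hxs (Fin.last K)
  have hC : 0 ≤ t ^ (K + 1) * ∏ i, α * xs i ^ (-(1 + α)) := by
    refine mul_nonneg (by positivity) (Finset.prod_nonneg fun i _ => ?_)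
    exact mul_nonneg hα.le (rpow_nonneg (pos_of_mem_ratioRegion hxs i).le _)
  -- the constraint `y < b` is implied by `y ≤ c * b` except at the null point `y = b`
  have hae : (fun y => (ratioRegion (K + 1) u).indicator
        (fun x => ENNReal.ofReal (flightsDensity α t (K + 1) x)) (Fin.snoc xs y)) =ᵐ[volume]
      (Ioc 0 (c * b)).indicator (fun y =>
        ENNReal.ofReal (t ^ (K + 1) * ∏ i, α * xs i ^ (-(1 + α))) *
          ENNReal.ofReal (frechetPDF α t y)) := by
    filter_upwards [compl_mem_ae_iff.2 (measure_singleton b)] with y hy_ne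
    by_cases hy : y ∈ Ioc 0 (c * b)
    · have hyb : y < b := (hy.2.trans (mul_le_of_le_one_left hb.le hu.2)).lt_of_ne hy_ne
      rw [indicator_of_mem (snoc_mem_ratioRegion_iff.2 ⟨hxs, hy, hyb⟩), indicator_of_mem hy,
        flightsDensity_snoc, ENNReal.ofReal_mul hC]
    · rw [indicator_of_notMem (fun h => hy (snoc_mem_ratioRegion_iff.1 h).2.1),
        indicator_of_notMem hy]
  rw [lintegral_congr_ae hae, lintegral_indicator measurableSet_Ioc,
    lintegral_const_mul' _ _ ENNReal.ofReal_ne_top,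
    lintegral_frechetPDF_Ioc hα ht (mul_pos hu.1 hb),
    ← ENNReal.ofReal_mul hC, indicator_of_mem hxs, rpow_mul_flightsDensity_rescale α t hu.1 hb.le]

theorem lintegral_ratioRegion_succ (hα : 0 < α) (ht : 0 < t) {u : Fin (K + 1) → ℝ}
    (hu : u (Fin.last K) ∈ Ioc 0 1) :
    ∫⁻ x in ratioRegion (K + 1) u, ENNReal.ofReal (flightsDensity α t (K + 1) x) =
      ENNReal.ofReal (u (Fin.last K) ^ (α * (K + 1))) * ∫⁻ xs in ratioRegion K (Fin.init u),
        ENNReal.ofReal (flightsDensity α (t * u (Fin.last K) ^ (-α)) K xs) := by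
  rw [← lintegral_indicator (measurableSet_ratioRegion _ _), lintegral_eq_lintegral_lintegral_snoc
      ((measurable_flightsDensity α t _).ennreal_ofReal.indicator (measurableSet_ratioRegion _ _))]
  simp_rw [lintegral_snoc_indicator_ratioRegion hα ht hu]
  rw [lintegral_indicator (measurableSet_ratioRegion _ _)]
  simp_rw [ENNReal.ofReal_mul (rpow_nonneg hu.1.le _)]
  rw [lintegral_const_mul' _ _ ENNReal.ofReal_ne_top]

theorem lintegral_ratioRegion_zero (hα : 0 < α) (ht : 0 < t) (u : Fin 0 → ℝ) :
    ∫⁻ x in ratioRegion 0 u, ENNReal.ofReal (flightsDensity α t 0 x) = 1 := by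
  let e := (MeasurableEquiv.funUnique (Fin 1) ℝ).symm
  have hpre : e ⁻¹' ratioRegion 0 u = Ioi 0 := by
    ext y
    simp [e, ratioRegion, Subsingleton.strictAnti]
  have hdens : ∀ y, flightsDensity α t 0 (e y) = frechetPDF α t y := by
    intro y
    simp only [e, flightsDensity, frechetPDF, MeasurableEquiv.funUnique_symm_apply,
      uniqueElim_const, Fin.prod_univ_succ, Fin.prod_univ_zero]
    ring
  have hmap : ∫⁻ y in e ⁻¹' ratioRegion 0 u, ENNReal.ofReal (flightsDensity α t 0 (e y)) =
      ∫⁻ x in ratioRegion 0 u, ENNReal.ofReal (flightsDensity α t 0 x) :=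
    ((volume_preserving_funUnique (Fin 1) ℝ).symm _).setLIntegral_comp_preimage_emb
      e.measurableEmbedding (fun x => ENNReal.ofReal (flightsDensity α t 0 x)) (ratioRegion 0 u)
  rw [← hmap, hpre]
  simp_rw [hdens]
  exact lintegral_frechetPDF_Ioi hα ht

end Induction

theorem lintegral_flightsDensity_ratioRegion {α : ℝ} (hα : 0 < α) {K : ℕ} {t : ℝ} (ht : 0 < t)
    {u : Fin K → ℝ} (hu : ∀ k, u k ∈ Ioc 0 1) :
    ∫⁻ x in ratioRegion K u, ENNReal.ofReal (flightsDensity α t K x) =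
      ENNReal.ofReal (∏ k : Fin K, u k ^ (α * ((k : ℕ) + 1))) := by
  induction K generalizing t with
  | zero => rw [lintegral_ratioRegion_zero hα ht, Fin.prod_univ_zero, ENNReal.ofReal_one]
  | succ K ih =>
    rw [lintegral_ratioRegion_succ hα ht (hu _),
      ih (u := Fin.init u) (mul_pos ht (rpow_pos_of_pos (hu (Fin.last K)).1 (-α))) (fun k => hu _),
      ← ENNReal.ofReal_mul (rpow_nonneg (hu _).1.le _), Fin.prod_univ_castSucc, mul_comm]
    simp only [Fin.init, Fin.val_castSucc, Fin.val_last]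

theorem consecutive_ratios_law_general (α t : ℝ) (hα : 0 < α) (ht : 0 < t)
    (K : ℕ) (u : Fin K → ℝ) (hu : ∀ k, u k ∈ Set.Ioc (0:ℝ) 1) :
    (∫ x in {x : Fin (K + 1) → ℝ | (StrictAnti x ∧ 0 < x (Fin.last K)) ∧
        ∀ k : Fin K, x k.succ ≤ u k * x k.castSucc},
      t ^ (K + 1) * Real.exp (-t * (x (Fin.last K)) ^ (-α)) *
        ∏ i : Fin (K + 1), α * (x i) ^ (-(1 + α)))
    = ∏ k : Fin K, (u k) ^ (α * ((k : ℕ) + 1)) := by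
  change ∫ x in ratioRegion K u, flightsDensity α t K x = _
  have hnonneg : 0 ≤ᵐ[volume.restrict (ratioRegion K u)] flightsDensity α t K :=
    ae_restrict_of_forall_mem (measurableSet_ratioRegion K u) fun x hx =>
      flightsDensity_nonneg hα ht (pos_of_mem_ratioRegion hx)
  rw [integral_eq_lintegral_of_nonneg_ae hnonneg
      (measurable_flightsDensity α t K).aestronglyMeasurable,
    lintegral_flightsDensity_ratioRegion hα ht hu,
    ENNReal.toReal_ofReal (Finset.prod_nonneg fun k _ => rpow_nonneg (hu k).1.le _)]

/-- Equation (3.22): integrating the joint density of the `K+1` largest flights of the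
α-selfsimilar one-sided Lévy process over the region where the consecutive ratios are at
most `u_k` gives `∏ u_k^{αk}`.  Here the coordinate `x i` represents `x_{i+1}`. -/
theorem consecutive_ratios_law (α t : ℝ) (hα : 0 < α) (ht : 0 < t)
    (K : ℕ) (hK : 1 ≤ K) (u : Fin K → ℝ) (hu : ∀ k, u k ∈ Set.Ioc (0:ℝ) 1) :
    (∫ x in {x : Fin (K + 1) → ℝ | (StrictAnti x ∧ 0 < x (Fin.last K)) ∧
        ∀ k : Fin K, x k.succ ≤ u k * x k.castSucc},
      t ^ (K + 1) * Real.exp (-t * (x (Fin.last K)) ^ (-α)) *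
        ∏ i : Fin (K + 1), α * (x i) ^ (-(1 + α)))
    = ∏ k : Fin K, (u k) ^ (α * ((k : ℕ) + 1)) :=
  consecutive_ratios_law_general α t hα ht K u hu
end

section
/- Let 0 < α < 1, and let ξ be a nonnegative real random variable on a probability space (Ω, P) whose Laplace transform satisfies E[exp(−ω·ξ)] = 1/(1 + G_α(ω)) for all real ω ≥ 0. Then E[ξ] = α/(1−α). -/
open Real MeasureTheory ProbabilityTheory

/-- For `0 < α < 1`, the function `G_α(ω) = α ∫_0^1 (1 - e^{-ωu}) u^{-(1+α)} du`. -/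
noncomputable def Galpha (α ω : ℝ) : ℝ :=
  α * ∫ u in (0:ℝ)..1, (1 - Real.exp (-ω * u)) * u ^ (-(1 + α))

/-!
The mean of a nonnegative random variable is the limit of the difference quotients
`(1 - E[e^{-ωξ}]) / ω` as `ω → 0+`: since `0 ≤ (1 - e^{-ωt}) / ω ≤ t` and the quotient tends to
`t`, Fatou's lemma makes `ξ` integrable and dominated convergence identifies the limit. For the
law `𝒢_α` the quotient is `(G_α(ω) / ω) / (1 + G_α(ω))`, and the same domination inside the
integral defining `G_α` gives `G_α(ω) / ω → α ∫_0^1 u^{-α} du = α / (1 - α)`.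
-/

open Filter Topology Set intervalIntegral

lemma one_sub_exp_neg_mul_div_le {ω : ℝ} (hω : 0 < ω) (t : ℝ) : (1 - exp (-ω * t)) / ω ≤ t := by
  rw [div_le_iff₀ hω]
  linarith [add_one_le_exp (-ω * t)]

lemma one_sub_exp_neg_mul_div_nonneg {ω t : ℝ} (hω : 0 < ω) (ht : 0 ≤ t) :
    0 ≤ (1 - exp (-ω * t)) / ω := by
  have : exp (-ω * t) ≤ 1 := exp_le_one_iff.2 (by nlinarith)
  exact div_nonneg (by linarith) hω.le

lemma tendsto_one_sub_exp_neg_mul_div (t : ℝ) :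
    Tendsto (fun ω => (1 - exp (-ω * t)) / ω) (𝓝[≠] 0) (𝓝 t) := by
  have h : HasDerivAt (fun ω => 1 - exp (-ω * t)) t 0 := by
    simpa using (((hasDerivAt_id (0:ℝ)).neg.mul_const t).exp).const_sub 1
  simpa [slope_fun_def_field] using h.tendsto_slope

section Laplace

variable {Ω : Type*} [MeasurableSpace Ω] {P : Measure Ω} {ξ : Ω → ℝ}

lemma integrable_exp_neg_mul [IsFiniteMeasure P] (hmeas : AEMeasurable ξ P)
    (hnonneg : 0 ≤ᵐ[P] ξ) {ω : ℝ} (hω : 0 ≤ ω) : Integrable (fun x => exp (-ω * ξ x)) P := by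
  refine (integrable_const (1 : ℝ)).mono' (by fun_prop) ?_
  filter_upwards [hnonneg] with x (hx : 0 ≤ ξ x)
  rw [norm_of_nonneg (exp_nonneg _), exp_le_one_iff]
  nlinarith

lemma integral_one_sub_exp_neg_mul_div [IsProbabilityMeasure P] (hmeas : AEMeasurable ξ P)
    (hnonneg : 0 ≤ᵐ[P] ξ) {ω : ℝ} (hω : 0 ≤ ω) :
    ∫ x, (1 - exp (-ω * ξ x)) / ω ∂P = (1 - ∫ x, exp (-ω * ξ x) ∂P) / ω := by
  rw [MeasureTheory.integral_div,
    integral_sub (integrable_const 1) (integrable_exp_neg_mul hmeas hnonneg hω),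
    MeasureTheory.integral_const, probReal_univ, one_smul]

theorem integral_eq_of_tendsto_one_sub_laplace_div [IsProbabilityMeasure P]
    (hmeas : AEMeasurable ξ P) (hnonneg : 0 ≤ᵐ[P] ξ) {c : ℝ}
    (h : Tendsto (fun ω => (1 - ∫ x, exp (-ω * ξ x) ∂P) / ω) (𝓝[>] 0) (𝓝 c)) :
    Integrable ξ P ∧ ∫ x, ξ x ∂P = c := by
  set f : ℝ → Ω → ℝ := fun ω x => (1 - exp (-ω * ξ x)) / ω
  have hf_meas : ∀ ω, AEStronglyMeasurable (f ω) P := fun ω => by fun_prop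
  have hf_integrable : ∀ {ω}, 0 ≤ ω → Integrable (f ω) P := fun hω =>
    ((integrable_const 1).sub (integrable_exp_neg_mul hmeas hnonneg hω)).div_const _
  have hf_bound : ∀ᶠ ω in 𝓝[>] 0, ∀ᵐ x ∂P, 0 ≤ f ω x ∧ f ω x ≤ ξ x := by
    filter_upwards [self_mem_nhdsWithin] with ω hω
    filter_upwards [hnonneg] with x hx
    exact ⟨one_sub_exp_neg_mul_div_nonneg hω hx, one_sub_exp_neg_mul_div_le hω _⟩
  have hf_lim : ∀ x, Tendsto (fun ω => f ω x) (𝓝[>] 0) (𝓝 (ξ x)) := fun x =>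
    (tendsto_one_sub_exp_neg_mul_div (ξ x)).mono_left (nhdsGT_le_nhdsNE 0)
  have hf_int : Tendsto (fun ω => ∫ x, f ω x ∂P) (𝓝[>] 0) (𝓝 c) :=
    h.congr' <| eventually_nhdsWithin_of_forall fun ω hω =>
      (integral_one_sub_exp_neg_mul_div hmeas hnonneg (le_of_lt hω)).symm
  have hξ : Integrable ξ P := by
    refine ⟨hmeas.aestronglyMeasurable, hasFiniteIntegral_iff_enorm.2 ?_⟩
    have hlintegral : Tendsto (fun ω => ∫⁻ x, ‖f ω x‖ₑ ∂P) (𝓝[>] 0) (𝓝 (ENNReal.ofReal c)) := by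
      refine (ENNReal.tendsto_ofReal hf_int).congr' ?_
      filter_upwards [self_mem_nhdsWithin, hf_bound] with ω (hω : 0 < ω) hbound
      rw [← ofReal_integral_norm_eq_lintegral_enorm (hf_integrable hω.le)]
      congr 1
      exact integral_congr_ae (hbound.mono fun x hx => (norm_of_nonneg hx.1).symm)
    calc ∫⁻ x, ‖ξ x‖ₑ ∂P = ∫⁻ x, liminf (fun ω => ‖f ω x‖ₑ) (𝓝[>] 0) ∂P :=
          lintegral_congr fun x => ((hf_lim x).enorm.liminf_eq).symm
      _ ≤ liminf (fun ω => ∫⁻ x, ‖f ω x‖ₑ ∂P) (𝓝[>] 0) :=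
          lintegral_liminf_le' fun ω => (hf_meas ω).enorm
      _ = ENNReal.ofReal c := hlintegral.liminf_eq
      _ < ⊤ := ENNReal.ofReal_lt_top
  refine ⟨hξ, tendsto_nhds_unique ?_ hf_int⟩
  refine tendsto_integral_filter_of_dominated_convergence ξ (Eventually.of_forall hf_meas) ?_ hξ
    (ae_of_all _ hf_lim)
  filter_upwards [hf_bound] with ω hω
  filter_upwards [hω] with x hx
  rw [norm_of_nonneg hx.1]
  exact hx.2

end Laplace

lemma self_mul_rpow_neg_one_add {u : ℝ} (hu : 0 ≤ u) {α : ℝ} (hα : α ≠ 0) :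
    u * u ^ (-(1 + α)) = u ^ (-α) := by
  rw [← rpow_one_add' hu (by simpa using hα), show 1 + -(1 + α) = -α by ring]

lemma tendsto_Galpha_div {α : ℝ} (hα0 : 0 < α) (hα1 : α < 1) :
    Tendsto (fun ω => Galpha α ω / ω) (𝓝[>] 0) (𝓝 (α / (1 - α))) := by
  have hlim : Tendsto (fun ω => ∫ u in (0:ℝ)..1, (1 - exp (-ω * u)) / ω * u ^ (-(1 + α)))
      (𝓝[>] 0) (𝓝 (∫ u in (0:ℝ)..1, u * u ^ (-(1 + α)))) := by
    refine tendsto_integral_filter_of_dominated_convergence (fun u => u ^ (-α))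
      (Eventually.of_forall fun ω => by fun_prop) ?_ (intervalIntegrable_rpow' (by linarith)) ?_
    · filter_upwards [self_mem_nhdsWithin] with ω hω
      refine ae_of_all _ fun u hu => ?_
      rw [uIoc_of_le zero_le_one] at hu
      have hpow : 0 ≤ u ^ (-(1 + α)) := rpow_nonneg hu.1.le _
      rw [norm_of_nonneg (mul_nonneg (one_sub_exp_neg_mul_div_nonneg hω hu.1.le) hpow),
        ← self_mul_rpow_neg_one_add hu.1.le hα0.ne']
      exact mul_le_mul_of_nonneg_right (one_sub_exp_neg_mul_div_le hω u) hpow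
    · exact ae_of_all _ fun u _ =>
        ((tendsto_one_sub_exp_neg_mul_div u).mono_left (nhdsGT_le_nhdsNE 0)).mul_const _
  have hint : ∫ u in (0:ℝ)..1, u * u ^ (-(1 + α)) = 1 / (1 - α) := by
    rw [integral_congr fun u hu => self_mul_rpow_neg_one_add
        (by rw [uIcc_of_le zero_le_one] at hu; exact hu.1) hα0.ne',
      integral_rpow (Or.inl (by linarith)), zero_rpow (by linarith), one_rpow]
    ring
  convert hlim.const_mul α using 1
  · ext ω
    simp_rw [Galpha, mul_div_assoc, div_mul_eq_mul_div, intervalIntegral.integral_div]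
  · rw [hint, mul_one_div]

/-- Equation (4.11): if ξ has Laplace transform `1/(1 + G_α)` then `E[ξ] = α/(1-α)`. -/
theorem mean_of_G_alpha_law (α : ℝ) (hα0 : 0 < α) (hα1 : α < 1)
    {Ω : Type*} [MeasurableSpace Ω] (P : Measure Ω) [IsProbabilityMeasure P]
    (ξ : Ω → ℝ) (hmeas : Measurable ξ) (hnonneg : ∀ x, 0 ≤ ξ x)
    (hlaplace : ∀ ω : ℝ, 0 ≤ ω → (∫ x, Real.exp (-ω * ξ x) ∂P) = 1 / (1 + Galpha α ω)) :
    (∫ x, ξ x ∂P) = α / (1 - α) := by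
  have hG := tendsto_Galpha_div hα0 hα1
  have hG0 : Tendsto (Galpha α) (𝓝[>] 0) (𝓝 0) := by
    have h := hG.mul (tendsto_nhdsWithin_of_tendsto_nhds (tendsto_id (x := 𝓝 (0:ℝ))))
    rw [mul_zero] at h
    refine h.congr' ?_
    filter_upwards [self_mem_nhdsWithin] with ω (hω : 0 < ω)
    exact div_mul_cancel₀ _ hω.ne'
  have hquot : Tendsto (fun ω => Galpha α ω / ω / (1 + Galpha α ω)) (𝓝[>] 0)
      (𝓝 (α / (1 - α))) := by
    have h := hG.div (hG0.const_add 1) (by norm_num)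
    rwa [add_zero, div_one] at h
  refine (integral_eq_of_tendsto_one_sub_laplace_div hmeas.aemeasurable
    (ae_of_all _ hnonneg) (hquot.congr' ?_)).2
  filter_upwards [self_mem_nhdsWithin,
    (hG0.const_add 1).eventually_ne (show (1:ℝ) + 0 ≠ 0 by norm_num)] with ω (hω : 0 < ω) hne
  rw [hlaplace ω hω.le]
  field_simp
  ring
end
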